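/- arXiv:2407.14989 — 2 statements merged into one kernel-verified Lean document; each statement's English description precedes it below -/
import Mathlib

section
/- Let d ∈ ℕ and L₁ > 0. Let f : ℝ^d → ℝ^d be continuously differentiable with sup_x ‖Df(x)‖_op ≤ L₁. Then for all t ≥ 0: sup_{x∈ℝ^d} ‖D_x U(f, x, t)‖_op ≤ exp(L₁ t) and sup_{x∈ℝ^d} ‖D_x Υ(f, t, x)‖_op ≤ exp(L₁ t) − 1, where D_x denotes the derivative with respect to the initial condition x. -/
/-!
Both bounds are Lipschitz estimates, since a derivative is bounded by any Lipschitz constant of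
the map: by Grönwall `‖U y t - U x t‖ ≤ e^{Kt} ‖y - x‖`, and integrating `f (U y s) - f (U x s)`
over `[0, t]` bounds the increments of `Υ` by `(e^{Kt} - 1) ‖y - x‖`.

For differentiability, `U y - U x` solves the variational equation `w' = Df(U x) w` up to an
error `o(‖y - x‖)` that is uniform on `[0, τ]`, so Grönwall compares it with `v (y - x)`, where
`v' = Df(U x) ∘ v` and `v 0 = 1`. Picard–Lindelöf solves this linear equation on intervals with
`2 K τ ≤ 1`, and the flow property `U(·, n τ) = U(·, τ)^[n]` reaches all times.
-/

open Set Filter Topology Metric Real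
open scoped NNReal

theorem gronwallBound_zero_eq_mul (K ε x : ℝ) :
    gronwallBound 0 K ε x = ε * gronwallBound 0 K 1 x := by
  unfold gronwallBound
  split_ifs <;> ring

theorem IsCompact.exists_pos_forall_norm_sub_sub_fderiv_le {E F : Type*}
    [NormedAddCommGroup E] [NormedSpace ℝ E] [NormedAddCommGroup F] [NormedSpace ℝ F]
    {f : E → F} (hf : ContDiff ℝ 1 f) {s : Set E} (hs : IsCompact s) {ε : ℝ} (hε : 0 < ε) :
    ∃ δ > 0, ∀ a ∈ s, ∀ b, ‖b - a‖ ≤ δ →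
      ‖f b - f a - fderiv ℝ f a (b - a)‖ ≤ ε * ‖b - a‖ := by
  obtain ⟨δ, hδ, hδf⟩ := mem_uniformity_dist.1 <|
    hs.uniformContinuousAt_of_continuousAt (fderiv ℝ f)
      (fun a _ => (hf.continuous_fderiv one_ne_zero).continuousAt) (dist_mem_uniformity hε)
  refine ⟨δ / 2, half_pos hδ, fun a ha b hb => ?_⟩
  refine (convex_closedBall a (δ / 2)).norm_image_sub_le_of_norm_hasFDerivWithin_le'
    (fun c _ => ((hf.differentiable one_ne_zero) c).hasFDerivAt.hasFDerivWithinAt) (fun c hc => ?_)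
    (mem_closedBall_self (half_pos hδ).le) (mem_closedBall_iff_norm.2 hb)
  have hac : dist a c < δ := by
    rw [dist_comm]; exact (mem_closedBall.1 hc).trans_lt (half_lt_self hδ)
  rw [← dist_eq_norm, dist_comm]
  exact (hδf hac ha).le

theorem exists_hasDerivWithinAt_clm_apply_Icc {F : Type*} [NormedAddCommGroup F]
    [NormedSpace ℝ F] [CompleteSpace F] {B : ℝ → F →L[ℝ] F} (hB : Continuous B)
    {K : ℝ≥0} (hBK : ∀ s, ‖B s‖ ≤ K) (v₀ : F) {h : ℝ} (hh : 0 ≤ h) (hKh : 2 * K * h ≤ 1) :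
    ∃ v : ℝ → F, v 0 = v₀ ∧
      ∀ s ∈ Icc 0 h, HasDerivWithinAt v (B s (v s)) (Icc 0 h) s := by
  -- On the ball of radius `‖v₀‖` around `v₀` the field is bounded by `2 K ‖v₀‖`.
  have hpl : IsPicardLindelof (fun s w => B s w) (⟨0, le_rfl, hh⟩ : Icc (0 : ℝ) h) v₀
      ‖v₀‖₊ 0 (2 * K * ‖v₀‖₊) K := by
    refine ⟨fun s _ => ((B s).lipschitz.weaken ?_).lipschitzOnWith,
      fun w _ => (hB.clm_apply continuous_const).continuousOn, fun s _ w hw => ?_, ?_⟩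
    · rw [← NNReal.coe_le_coe, coe_nnnorm]; exact hBK s
    · have hw : ‖w‖ ≤ 2 * ‖v₀‖ := by
        have := norm_le_of_mem_closedBall hw; simp only [coe_nnnorm] at this; linarith
      calc ‖B s w‖ ≤ ‖B s‖ * ‖w‖ := (B s).le_opNorm w
        _ ≤ K * (2 * ‖v₀‖) := by gcongr; exact hBK s
        _ = _ := by push_cast; ring
    · simp only [NNReal.coe_mul, NNReal.coe_ofNat, coe_nnnorm, sub_zero, NNReal.coe_zero,
        sub_self, max_eq_left hh]
      nlinarith [norm_nonneg v₀]
  exact hpl.exists_eq_forall_mem_Icc_hasDerivWithinAt₀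

structure IsFlow {E : Type*} [NormedAddCommGroup E] [NormedSpace ℝ E] (f : E → E)
    (U : E → ℝ → E) : Prop where
  hasDerivAt : ∀ x t, HasDerivAt (U x) (f (U x t)) t
  apply_zero : ∀ x, U x 0 = x

namespace IsFlow

variable {E : Type*} [NormedAddCommGroup E] [NormedSpace ℝ E]
  {f : E → E} {K : ℝ≥0} {U : E → ℝ → E}

theorem continuous (hU : IsFlow f U) (x : E) : Continuous (U x) :=
  continuous_iff_continuousAt.2 fun t => (hU.hasDerivAt x t).continuousAt

theorem apply_add (hU : IsFlow f U) (hf : LipschitzWith K f) (x : E) (s r : ℝ) :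
    U x (s + r) = U (U x s) r := by
  have := ODE_solution_unique_univ (v := fun _ => f) (s := fun _ => univ) (t₀ := 0)
    (fun _ => hf.lipschitzOnWith)
    (fun r => ⟨(hU.hasDerivAt x (s + r)).comp_const_add s r, trivial⟩)
    (fun r => ⟨hU.hasDerivAt (U x s) r, trivial⟩) (by simp [hU.apply_zero])
  exact congrFun this r

theorem apply_nat_mul (hU : IsFlow f U) (hf : LipschitzWith K f) (τ : ℝ) (n : ℕ) :
    (fun y => U y (n * τ)) = (fun y => U y τ)^[n] := by
  induction n with
  | zero => ext1 y; simp [hU.apply_zero]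
  | succ n ih =>
    ext1 y
    rw [Function.iterate_succ_apply', ← congrFun ih y, ← hU.apply_add hf]
    push_cast; ring_nf

theorem norm_sub_le (hU : IsFlow f U) (hf : LipschitzWith K f) (x y : E) {t : ℝ} (ht : 0 ≤ t) :
    ‖U y t - U x t‖ ≤ exp (K * t) * ‖y - x‖ := by
  have := dist_le_of_trajectories_ODE (v := fun _ => f) (fun _ => hf)
    (hU.continuous y).continuousOn (fun s _ => (hU.hasDerivAt y s).hasDerivWithinAt)
    (hU.continuous x).continuousOn (fun s _ => (hU.hasDerivAt x s).hasDerivWithinAt)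
    le_rfl t ⟨ht, le_rfl⟩
  simpa [hU.apply_zero, dist_eq_norm, mul_comm] using this

theorem norm_sub_sub_le (hU : IsFlow f U) (hf : LipschitzWith K f) (x y : E) {t : ℝ}
    (ht : 0 ≤ t) : ‖(U y t - y) - (U x t - x)‖ ≤ (exp (K * t) - 1) * ‖y - x‖ := by
  have hB (s : ℝ) : HasDerivAt (fun s => (exp (K * s) - 1) * ‖y - x‖)
      (K * exp (K * s) * ‖y - x‖) s := by
    simpa [mul_comm] using
      (((hasDerivAt_id s).const_mul (K : ℝ)).exp.sub_const 1).mul_const ‖y - x‖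
  have hd (s : ℝ) : HasDerivAt (fun s => (U y s - y) - (U x s - x)) (f (U y s) - f (U x s)) s :=
    ((hU.hasDerivAt y s).sub_const y).sub ((hU.hasDerivAt x s).sub_const x)
  refine image_norm_le_of_norm_deriv_right_le_deriv_boundary
    (fun s _ => (hd s).continuousAt.continuousWithinAt) (fun s _ => (hd s).hasDerivWithinAt)
    (by simp [hU.apply_zero]) hB (fun s hs => ?_) ⟨ht, le_rfl⟩
  calc ‖f (U y s) - f (U x s)‖ ≤ K * ‖U y s - U x s‖ := by
        simpa [dist_eq_norm] using hf.dist_le_mul (U y s) (U x s)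
    _ ≤ K * (exp (K * s) * ‖y - x‖) := by gcongr; exact hU.norm_sub_le hf x y hs.1
    _ = K * exp (K * s) * ‖y - x‖ := by ring

theorem norm_sub_sub_variational_le (hU : IsFlow f U) (hf : LipschitzWith K f) {x y : E}
    {τ η : ℝ} (hτ : 0 ≤ τ) {v : ℝ → E →L[ℝ] E} (hv0 : v 0 = 1)
    (hv : ∀ s ∈ Icc 0 τ, HasDerivWithinAt v (fderiv ℝ f (U x s) ∘L v s) (Icc 0 τ) s)
    (hη : ∀ s ∈ Ico 0 τ,
      ‖f (U y s) - f (U x s) - fderiv ℝ f (U x s) (U y s - U x s)‖ ≤ η) :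
    ‖U y τ - U x τ - v τ (y - x)‖ ≤ gronwallBound 0 K η τ := by
  have hv' (s : ℝ) (hs : s ∈ Ico 0 τ) : HasDerivWithinAt (fun s => v s (y - x))
      (fderiv ℝ f (U x s) (v s (y - x))) (Ici s) s := by
    have hIcc : Icc 0 τ ∈ 𝓝[≥] s :=
      mem_of_superset (Icc_mem_nhdsGE hs.2) (Icc_subset_Icc_left hs.1)
    exact (ContinuousLinearMap.apply ℝ E (y - x)).hasFDerivAt.comp_hasDerivWithinAt s
      ((hv s (Ico_subset_Icc_self hs)).mono_of_mem_nhdsWithin hIcc)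
  have := dist_le_of_approx_trajectories_ODE (v := fun s z => fderiv ℝ f (U x s) z) (δ := 0)
    (f := fun s => U y s - U x s) (εf := η) (εg := 0)
    (fun s => (fderiv ℝ f (U x s)).lipschitz.weaken (norm_fderiv_le_of_lipschitz ℝ hf))
    (fun s _ => ((hU.hasDerivAt y s).sub (hU.hasDerivAt x s)).continuousAt.continuousWithinAt)
    (fun s _ => ((hU.hasDerivAt y s).sub (hU.hasDerivAt x s)).hasDerivWithinAt)
    (fun s hs => by rw [dist_eq_norm]; exact hη s hs)
    (fun s hs => (hv s hs).continuousWithinAt.clm_apply continuousWithinAt_const) hv'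
    (fun s _ => by simp) (by simp [hU.apply_zero, hv0]) τ ⟨hτ, le_rfl⟩
  simpa [dist_eq_norm] using this

theorem hasFDerivAt_of_variational (hU : IsFlow f U) (hf : ContDiff ℝ 1 f)
    (hfK : LipschitzWith K f) {x : E} {τ : ℝ} (hτ : 0 ≤ τ) {v : ℝ → E →L[ℝ] E}
    (hv0 : v 0 = 1)
    (hv : ∀ s ∈ Icc 0 τ, HasDerivWithinAt v (fderiv ℝ f (U x s) ∘L v s) (Icc 0 τ) s) :
    HasFDerivAt (fun y => U y τ) (v τ) x := by
  set M := exp (K * τ)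
  set G := gronwallBound 0 K 1 τ
  have hG : 0 ≤ G := by
    simpa [gronwallBound_x0] using gronwallBound_mono le_rfl zero_le_one K.2 hτ
  rw [hasFDerivAt_iff_isLittleO, Asymptotics.isLittleO_iff]
  intro c hc
  set ε := c / (M * G + 1)
  obtain ⟨δ, hδ, hfδ⟩ := ((isCompact_Icc (a := 0) (b := τ)).image
    (hU.continuous x)).exists_pos_forall_norm_sub_sub_fderiv_le hf (by positivity : 0 < ε)
  filter_upwards [ball_mem_nhds x (div_pos hδ (exp_pos (K * τ)))] with y hy
  rw [mem_ball_iff_norm] at hy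
  have hM (s : ℝ) (hs : s ∈ Icc 0 τ) : ‖U y s - U x s‖ ≤ M * ‖y - x‖ :=
    (hU.norm_sub_le hfK x y hs.1).trans <|
      mul_le_mul_of_nonneg_right (exp_le_exp.2 (by gcongr; exact hs.2)) (norm_nonneg _)
  have hη (s : ℝ) (hs : s ∈ Ico 0 τ) :
      ‖f (U y s) - f (U x s) - fderiv ℝ f (U x s) (U y s - U x s)‖ ≤
        ε * M * ‖y - x‖ := by
    have hs' := Ico_subset_Icc_self hs
    have hδ' : ‖U y s - U x s‖ ≤ δ := (hM s hs').trans <| by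
      rw [← le_div_iff₀' (exp_pos _)]; exact hy.le
    rw [mul_assoc]
    exact (hfδ (U x s) ⟨s, hs', rfl⟩ (U y s) hδ').trans (by gcongr; exact hM s hs')
  have hεMG : ε * (M * G) ≤ c := by
    rw [div_mul_eq_mul_div, div_le_iff₀ (by positivity)]
    nlinarith [mul_nonneg (exp_pos (K * τ)).le hG]
  calc ‖U y τ - U x τ - v τ (y - x)‖ ≤ gronwallBound 0 K (ε * M * ‖y - x‖) τ :=
        hU.norm_sub_sub_variational_le hfK hτ hv0 hv hη
    _ = ε * (M * G) * ‖y - x‖ := by rw [gronwallBound_zero_eq_mul]; ring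
    _ ≤ c * ‖y - x‖ := by gcongr

theorem differentiable_of_two_mul_le_one [CompleteSpace E] (hU : IsFlow f U)
    (hf : ContDiff ℝ 1 f) (hfK : LipschitzWith K f) {τ : ℝ} (hτ : 0 ≤ τ)
    (hKτ : 2 * K * τ ≤ 1) :
    Differentiable ℝ (fun y => U y τ) := by
  intro x
  have hA : Continuous fun s => fderiv ℝ f (U x s) :=
    (hf.continuous_fderiv one_ne_zero).comp (hU.continuous x)
  have hB (s : ℝ) : ‖ContinuousLinearMap.compL ℝ E E E (fderiv ℝ f (U x s))‖ ≤ K := calc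
    _ ≤ ‖ContinuousLinearMap.compL ℝ E E E‖ * ‖fderiv ℝ f (U x s)‖ :=
      ContinuousLinearMap.le_opNorm _ _
    _ ≤ 1 * K := by
      gcongr
      exacts [ContinuousLinearMap.norm_compL_le ℝ E E E, norm_fderiv_le_of_lipschitz ℝ hfK]
    _ = K := one_mul _
  obtain ⟨v, hv0, hv⟩ := exists_hasDerivWithinAt_clm_apply_Icc
    ((ContinuousLinearMap.compL ℝ E E E).continuous.comp hA) hB 1 hτ hKτ
  exact (hU.hasFDerivAt_of_variational hf hfK hτ hv0 hv).differentiableAt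

theorem differentiable [CompleteSpace E] (hU : IsFlow f U) (hf : ContDiff ℝ 1 f)
    (hfK : LipschitzWith K f) {t : ℝ} (ht : 0 ≤ t) : Differentiable ℝ (fun y => U y t) := by
  obtain ⟨n, hn⟩ := exists_nat_gt (2 * K * t)
  have hn0 : (0 : ℝ) < n := lt_of_le_of_lt (by positivity) hn
  have hsplit := hU.apply_nat_mul hfK (t / n) n
  rw [mul_div_cancel₀ t hn0.ne'] at hsplit
  rw [hsplit]
  refine (hU.differentiable_of_two_mul_le_one hf hfK (by positivity) ?_).iterate n
  rw [← mul_div_assoc, div_le_one hn0]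
  exact hn.le

end IsFlow

theorem stmt7_general (d : ℕ) (L₁ : ℝ)
    (f : EuclideanSpace ℝ (Fin d) → EuclideanSpace ℝ (Fin d))
    (hf : ContDiff ℝ 1 f) (hf1 : ∀ x, ‖fderiv ℝ f x‖ ≤ L₁)
    (U : EuclideanSpace ℝ (Fin d) → ℝ → EuclideanSpace ℝ (Fin d))
    (hU0 : ∀ x, U x 0 = x)
    (hU : ∀ x t, HasDerivAt (U x) (f (U x t)) t) :
    ∀ t, 0 ≤ t →
      Differentiable ℝ (fun y => U y t) ∧
      (∀ x, ‖fderiv ℝ (fun y => U y t) x‖ ≤ Real.exp (L₁ * t)) ∧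
      (∀ x, ‖fderiv ℝ (fun y => U y t - y) x‖ ≤ Real.exp (L₁ * t) - 1) := by
  intro t ht
  have hflow : IsFlow f U := ⟨hU, hU0⟩
  set K : ℝ≥0 := ⟨L₁, (norm_nonneg _).trans (hf1 0)⟩
  have hfK : LipschitzWith K f :=
    lipschitzWith_of_nnnorm_fderiv_le (hf.differentiable one_ne_zero) fun x => hf1 x
  have hexp : 1 ≤ exp (L₁ * t) := one_le_exp (mul_nonneg K.2 ht)
  refine ⟨hflow.differentiable hf hfK ht, fun x => ?_, fun x => ?_⟩
  · exact norm_fderiv_le_of_lip' ℝ (by linarith)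
      (Eventually.of_forall fun y => hflow.norm_sub_le hfK x y ht)
  · exact norm_fderiv_le_of_lip' ℝ (by linarith)
      (Eventually.of_forall fun y => hflow.norm_sub_sub_le hfK x y ht)

/-- Lemma `lmm:derivIncrem`.
Let `f : ℝ^d → ℝ^d` be continuously differentiable with `‖Df(x)‖_op ≤ L₁` for all `x`,
and let `U` be the flow of `u̇ = f(u)`.  Then for all `t ≥ 0`, the derivative with
respect to the initial condition satisfies `‖D_x U(f, x, t)‖_op ≤ exp(L₁ t)` and the
derivative of the increment map `Υ(f, t, x) = U(f, x, t) − x` satisfies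
`‖D_x Υ(f, t, x)‖_op ≤ exp(L₁ t) − 1`, for all `x`. -/
theorem stmt7 (d : ℕ) (L₁ : ℝ) (hL₁ : 0 < L₁)
    (f : EuclideanSpace ℝ (Fin d) → EuclideanSpace ℝ (Fin d))
    (hf : ContDiff ℝ 1 f) (hf1 : ∀ x, ‖fderiv ℝ f x‖ ≤ L₁)
    (U : EuclideanSpace ℝ (Fin d) → ℝ → EuclideanSpace ℝ (Fin d))
    (hU0 : ∀ x, U x 0 = x)
    (hU : ∀ x t, HasDerivAt (U x) (f (U x t)) t) :
    ∀ t, 0 ≤ t →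
      Differentiable ℝ (fun y => U y t) ∧
      (∀ x, ‖fderiv ℝ (fun y => U y t) x‖ ≤ Real.exp (L₁ * t)) ∧
      (∀ x, ‖fderiv ℝ (fun y => U y t - y) x‖ ≤ Real.exp (L₁ * t) - 1) :=
  stmt7_general d L₁ f hf hf1 U hU0 hU
end

section
/- Let d, ℓ ∈ ℕ and N := binom(ℓ+d, d). Let 𝐱 = (x₁, …, x_N), 𝐳 = (z₁, …, z_N) ∈ (ℝ^d)^N and δ₀, γ, s > 0 satisfy: ‖Ψ(η_𝐱(𝐱))^{-1}‖_op ≤ s (in particular Ψ(η_𝐱(𝐱)) is invertible), δ₀ ≤ diam(𝐱), and max_{k≤N} ‖x_k − z_k‖ ≤ γ. If max(4, 16·N·ℓ·s)·γ ≤ δ₀, then Ψ(η_𝐳(𝐳)) is invertible and ‖Ψ(η_𝐳(𝐳))^{-1} − Ψ(η_𝐱(𝐱))^{-1}‖_op ≤ 16·N·ℓ·s²·γ/δ₀. -/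
/-!
Normalising a tuple puts all of its points in the unit ball, and moving every point by at most
`γ` moves the normalised points by at most `8γ/δ₀`: the mean moves by at most `γ`, and the
diameter by at most `2γ`, so it stays above `δ₀/2`. On the unit ball a monomial of degree at
most `ℓ` is `ℓ`-Lipschitz, so every entry of `Ψ(η_𝐳(𝐳)) - Ψ(η_𝐱(𝐱))` is at most `8ℓγ/δ₀` and
its operator norm at most `N` times that. The hypothesis makes `s` times this perturbation at
most `1/2`; then `B = Ψ(η_𝐳(𝐳))` is invertible by the Neumann series around `A = Ψ(η_𝐱(𝐱))`,
and `B⁻¹ - A⁻¹ = B⁻¹(A - B)A⁻¹` gives `‖B⁻¹ - A⁻¹‖ ≤ 2‖A⁻¹‖²‖B - A‖`.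
-/

/-- Index type for monomials `x^α` of total degree at most `ℓ` in `d` variables.
Its cardinality is `N = binom(ℓ+d, d)`; we use it to index both the `N` base points
of a tuple `𝐱 ∈ (ℝ^d)^N` and the rows/columns of the matrix `Ψ(𝐱)`. -/
abbrev MonIdx (d ℓ : ℕ) := {α : Fin d → Fin (ℓ + 1) // ∑ i, (α i : ℕ) ≤ ℓ}

/-- The matrix `Ψ(𝐱) ∈ ℝ^{N×N}` whose rows are the monomial vectors
`ψ(x_k) = (x_k^α)_{|α|≤ℓ}` of the points of the tuple `𝐱`. -/
noncomputable def PsiMat (d ℓ : ℕ)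
    (w : MonIdx d ℓ → EuclideanSpace ℝ (Fin d)) :
    Matrix (MonIdx d ℓ) (MonIdx d ℓ) ℝ :=
  fun r α => ∏ i, (w r) i ^ (α.1 i : ℕ)

/-- The operator norm of a square real matrix with respect to Euclidean norms. -/
noncomputable def matOpNorm {ι : Type*} [Fintype ι] [DecidableEq ι]
    (M : Matrix ι ι ℝ) : ℝ :=
  ‖LinearMap.toContinuousLinearMap (Matrix.toEuclideanLin M)‖

/-- The diameter `diam(𝐰) = max_{i,j} ‖w_i − w_j‖` of a tuple of points in `ℝ^d`. -/
noncomputable def tupDiam {ι : Type*} {d : ℕ}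
    (w : ι → EuclideanSpace ℝ (Fin d)) : ℝ :=
  ⨆ p : ι × ι, ‖w p.1 - w p.2‖

/-- The normalization map `η_𝐰(y) = (y − (1/N)·Σᵢ wᵢ)/diam(𝐰)`. -/
noncomputable def normMap {ι : Type*} [Fintype ι] {d : ℕ}
    (w : ι → EuclideanSpace ℝ (Fin d)) (y : EuclideanSpace ℝ (Fin d)) :
    EuclideanSpace ℝ (Fin d) :=
  (tupDiam w)⁻¹ • (y - (Fintype.card ι : ℝ)⁻¹ • ∑ i, w i)

open scoped Matrix.Norms.L2Operator

section NormedRing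
variable {R : Type*} [NormedRing R]

theorem isUnit_of_norm_inverse_mul_norm_sub_lt_one [HasSummableGeomSeries R] {a b : R}
    (ha : IsUnit a) (h : ‖Ring.inverse a‖ * ‖b - a‖ < 1) : IsUnit b := by
  obtain ⟨u, rfl⟩ := ha
  rw [Ring.inverse_unit] at h
  set c : R := ↑u⁻¹ * (b - u)
  have hc : ‖-c‖ < 1 := (norm_neg c).trans_lt ((norm_mul_le _ _).trans_lt h)
  have hb : b = u * (1 - -c) := by simp [c, mul_add, ← mul_assoc]
  exact hb ▸ u.isUnit.mul (Units.oneSub (-c) hc).isUnit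

theorem norm_inverse_sub_inverse_le {a b : R} (hab : IsUnit a ↔ IsUnit b) {s ε : ℝ}
    (hs : ‖Ring.inverse a‖ ≤ s) (hε : ‖b - a‖ ≤ ε) (hsε : s * ε ≤ 1 / 2) :
    ‖Ring.inverse b - Ring.inverse a‖ ≤ 2 * s ^ 2 * ε := by
  have hs₀ : 0 ≤ s := (norm_nonneg _).trans hs
  have hε₀ : 0 ≤ ε := (norm_nonneg _).trans hε
  have hdiff : ‖Ring.inverse b - Ring.inverse a‖ ≤ ‖Ring.inverse b‖ * ε * s := by
    rw [Ring.inverse_sub_inverse hab.symm]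
    refine norm_mul₃_le.trans ?_
    rw [norm_sub_rev]
    gcongr
  -- `‖b⁻¹‖ ≤ ‖a⁻¹‖ + ‖b⁻¹ - a⁻¹‖ ≤ s + ‖b⁻¹‖ / 2`
  have hb : ‖Ring.inverse b‖ ≤ 2 * s := by
    have := norm_le_insert' (Ring.inverse b) (Ring.inverse a)
    nlinarith [norm_nonneg (Ring.inverse b)]
  calc ‖Ring.inverse b - Ring.inverse a‖ ≤ ‖Ring.inverse b‖ * ε * s := hdiff
    _ ≤ 2 * s * ε * s := by gcongr
    _ = 2 * s ^ 2 * ε := by ring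

theorem isUnit_and_norm_inverse_sub_inverse_le [HasSummableGeomSeries R] {a b : R}
    (ha : IsUnit a) {s ε : ℝ} (hs : ‖Ring.inverse a‖ ≤ s) (hε : ‖b - a‖ ≤ ε)
    (hsε : s * ε ≤ 1 / 2) :
    IsUnit b ∧ ‖Ring.inverse b - Ring.inverse a‖ ≤ 2 * s ^ 2 * ε := by
  have hb : IsUnit b := isUnit_of_norm_inverse_mul_norm_sub_lt_one ha <|
    (mul_le_mul hs hε (norm_nonneg _) ((norm_nonneg _).trans hs)).trans_lt (by linarith)
  exact ⟨hb, norm_inverse_sub_inverse_le (iff_of_true ha hb) hs hε hsε⟩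

end NormedRing

namespace Matrix
variable {𝕜 m n : Type*} [RCLike 𝕜] [Fintype m] [Fintype n] [DecidableEq n]

theorem l2_opNorm_le_sqrt_sum_norm_sq (A : Matrix m n 𝕜) :
    ‖A‖ ≤ √(∑ i, ∑ j, ‖A i j‖ ^ 2) := by
  refine ContinuousLinearMap.opNorm_le_bound _ (by positivity) fun v => ?_
  rw [← Real.sqrt_sq (norm_nonneg _), ← Real.sqrt_sq (norm_nonneg v), ← Real.sqrt_mul
    (by positivity)]
  refine Real.sqrt_le_sqrt ?_
  rw [EuclideanSpace.norm_sq_eq, EuclideanSpace.norm_sq_eq, Finset.sum_mul]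
  refine Finset.sum_le_sum fun i _ => ?_
  calc ‖∑ j, A i j * v j‖ ^ 2 ≤ (∑ j, ‖A i j‖ * ‖v j‖) ^ 2 := by
        gcongr
        exact (norm_sum_le _ _).trans_eq (by simp_rw [norm_mul])
    _ ≤ (∑ j, ‖A i j‖ ^ 2) * ∑ j, ‖v j‖ ^ 2 := Finset.sum_mul_sq_le_sq_mul_sq _ _ _

theorem l2_opNorm_le_card_mul {A : Matrix n n 𝕜} {C : ℝ} (hC : 0 ≤ C)
    (h : ∀ i j, ‖A i j‖ ≤ C) : ‖A‖ ≤ Fintype.card n * C := by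
  refine (l2_opNorm_le_sqrt_sum_norm_sq A).trans (Real.sqrt_le_iff.mpr ⟨by positivity, ?_⟩)
  calc ∑ i, ∑ j, ‖A i j‖ ^ 2 ≤ ∑ _i : n, ∑ _j : n, C ^ 2 := by gcongr; exact h _ _
    _ = (Fintype.card n * C) ^ 2 := by
        simp only [Finset.sum_const, Finset.card_univ, nsmul_eq_mul]; ring

end Matrix

theorem norm_prod_sub_prod_le {ι R : Type*} [NormedCommRing R] [NormOneClass R]
    (s : Finset ι) {f g : ι → R} (hf : ∀ i ∈ s, ‖f i‖ ≤ 1) (hg : ∀ i ∈ s, ‖g i‖ ≤ 1) :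
    ‖∏ i ∈ s, f i - ∏ i ∈ s, g i‖ ≤ ∑ i ∈ s, ‖f i - g i‖ := by
  induction s using Finset.cons_induction with
  | empty => simp
  | cons a s ha ih =>
    simp only [Finset.forall_mem_cons] at hf hg
    rw [Finset.prod_cons, Finset.prod_cons, Finset.sum_cons]
    have hgs : ‖∏ i ∈ s, g i‖ ≤ 1 := (Finset.norm_prod_le s g).trans
      (Finset.prod_le_one (fun _ _ => norm_nonneg _) hg.2)
    calc ‖f a * ∏ i ∈ s, f i - g a * ∏ i ∈ s, g i‖
        = ‖f a * (∏ i ∈ s, f i - ∏ i ∈ s, g i) + (f a - g a) * ∏ i ∈ s, g i‖ := by ring_nf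
      _ ≤ ‖∏ i ∈ s, f i - ∏ i ∈ s, g i‖ + ‖f a - g a‖ := by
        refine (norm_add_le _ _).trans (add_le_add ?_ ?_) <;> refine (norm_mul_le _ _).trans ?_
        · exact mul_le_of_le_one_left (norm_nonneg _) hf.1
        · exact mul_le_of_le_one_right (norm_nonneg _) hgs
      _ ≤ ‖f a - g a‖ + ∑ i ∈ s, ‖f i - g i‖ := by linarith [ih hf.2 hg.2]

theorem abs_pow_sub_pow_le_of_abs_le_one {a b : ℝ} (ha : |a| ≤ 1) (hb : |b| ≤ 1) (n : ℕ) :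
    |a ^ n - b ^ n| ≤ n * |a - b| := by
  simpa using norm_prod_sub_prod_le (Finset.range n) (f := fun _ => a) (g := fun _ => b)
    (fun _ _ => by simpa using ha) (fun _ _ => by simpa using hb)

theorem abs_monomial_sub_le {ι : Type*} [Fintype ι] (α : ι → ℕ) {u v : EuclideanSpace ℝ ι}
    (hu : ‖u‖ ≤ 1) (hv : ‖v‖ ≤ 1) :
    |∏ i, u i ^ α i - ∏ i, v i ^ α i| ≤ (∑ i, α i : ℕ) * ‖u - v‖ := by
  have hcoord (w : EuclideanSpace ℝ ι) (i : ι) : |w i| ≤ ‖w‖ := PiLp.norm_apply_le w i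
  have hpow (w : EuclideanSpace ℝ ι) (hw : ‖w‖ ≤ 1) (i : ι) : ‖w i ^ α i‖ ≤ 1 := by
    rw [norm_pow]; exact pow_le_one₀ (norm_nonneg _) ((hcoord w i).trans hw)
  calc |∏ i, u i ^ α i - ∏ i, v i ^ α i| ≤ ∑ i, |u i ^ α i - v i ^ α i| := by
        simpa only [Real.norm_eq_abs] using
          norm_prod_sub_prod_le _ (fun i _ => hpow u hu i) (fun i _ => hpow v hv i)
    _ ≤ ∑ i, (α i : ℝ) * ‖u - v‖ := by
        gcongr with i
        refine (abs_pow_sub_pow_le_of_abs_le_one ((hcoord u i).trans hu)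
          ((hcoord v i).trans hv) _).trans ?_
        gcongr
        exact hcoord (u - v) i
    _ = (∑ i, α i : ℕ) * ‖u - v‖ := by push_cast; rw [Finset.sum_mul]

-- Stars and bars: the slack `ℓ - |α|` of a multi-index is recorded as copies of `none`.
def MonIdx.toSym {d ℓ : ℕ} (α : MonIdx d ℓ) : Sym (Option (Fin d)) ℓ :=
  ⟨Multiset.replicate (ℓ - ∑ i, (α.1 i : ℕ)) none + ∑ i, Multiset.replicate (α.1 i) (some i), by
    simp [Multiset.card_sum, α.2]⟩

theorem MonIdx.count_toSym {d ℓ : ℕ} (α : MonIdx d ℓ) (i : Fin d) :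
    (α.toSym : Multiset (Option (Fin d))).count (some i) = α.1 i := by
  simp [MonIdx.toSym, Multiset.count_sum', Multiset.count_replicate]

theorem card_monIdx_le (d ℓ : ℕ) : Fintype.card (MonIdx d ℓ) ≤ (ℓ + d).choose d := by
  have hinj : Function.Injective (MonIdx.toSym (d := d) (ℓ := ℓ)) := fun α β h =>
    Subtype.ext <| funext fun i => Fin.ext <| by rw [← α.count_toSym, ← β.count_toSym, h]
  calc Fintype.card (MonIdx d ℓ) ≤ Fintype.card (Sym (Option (Fin d)) ℓ) :=
        Fintype.card_le_of_injective _ hinj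
    _ = (ℓ + d).choose d := by
        rw [Sym.card_sym_eq_choose, Fintype.card_option, Fintype.card_fin,
          show d + 1 + ℓ - 1 = ℓ + d by omega, Nat.choose_symm_add]

theorem Convex.inv_card_smul_sum_mem {ι E : Type*} [Fintype ι] [Nonempty ι] [AddCommGroup E]
    [Module ℝ E] {s : Set E} (hs : Convex ℝ s) {f : ι → E} (hf : ∀ i, f i ∈ s) :
    (Fintype.card ι : ℝ)⁻¹ • ∑ i, f i ∈ s := by
  rw [Finset.smul_sum]
  refine hs.sum_mem (fun _ _ => by positivity) ?_ fun i _ => hf i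
  simp [Finset.card_univ]

section Normalization
variable {ι : Type*} {d : ℕ} (w v : ι → EuclideanSpace ℝ (Fin d))

theorem norm_sub_le_tupDiam [Finite ι] (i j : ι) : ‖w i - w j‖ ≤ tupDiam w :=
  le_ciSup (f := fun p : ι × ι => ‖w p.1 - w p.2‖) (Set.finite_range _).bddAbove (i, j)

theorem tupDiam_le_of_forall [Nonempty ι] {C : ℝ} (h : ∀ i j, ‖w i - w j‖ ≤ C) :
    tupDiam w ≤ C :=
  ciSup_le fun p => h p.1 p.2

variable [Fintype ι]

noncomputable def tupMean : EuclideanSpace ℝ (Fin d) := (Fintype.card ι : ℝ)⁻¹ • ∑ i, w i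

theorem normMap_eq (y : EuclideanSpace ℝ (Fin d)) :
    normMap w y = (tupDiam w)⁻¹ • (y - tupMean w) := rfl

variable [Nonempty ι] {w v}

theorem tupDiam_le_add {γ : ℝ} (h : ∀ k, ‖v k - w k‖ ≤ γ) : tupDiam v ≤ tupDiam w + 2 * γ := by
  refine tupDiam_le_of_forall v fun i j => ?_
  calc ‖v i - v j‖ = ‖(w i - w j) + (v i - w i) - (v j - w j)‖ := by congr 1; abel
    _ ≤ ‖w i - w j‖ + ‖v i - w i‖ + ‖v j - w j‖ := norm_sub_le_of_le (norm_add_le _ _) le_rfl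
    _ ≤ tupDiam w + 2 * γ := by linarith [norm_sub_le_tupDiam w i j, h i, h j]

theorem abs_tupDiam_sub_le {γ : ℝ} (h : ∀ k, ‖v k - w k‖ ≤ γ) :
    |tupDiam v - tupDiam w| ≤ 2 * γ := by
  have h' : ∀ k, ‖w k - v k‖ ≤ γ := fun k => norm_sub_rev (w k) (v k) ▸ h k
  rw [abs_sub_le_iff]
  constructor <;> linarith [tupDiam_le_add h, tupDiam_le_add h']

variable (w) in
theorem norm_sub_tupMean_le (k : ι) : ‖w k - tupMean w‖ ≤ tupDiam w := by
  rw [← dist_eq_norm, dist_comm, ← Metric.mem_closedBall]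
  exact (convex_closedBall _ _).inv_card_smul_sum_mem fun i =>
    Metric.mem_closedBall.mpr ((dist_eq_norm _ _).trans_le (norm_sub_le_tupDiam w i k))

theorem norm_tupMean_sub_le {γ : ℝ} (h : ∀ k, ‖v k - w k‖ ≤ γ) :
    ‖tupMean v - tupMean w‖ ≤ γ := by
  rw [tupMean, tupMean, ← smul_sub, ← Finset.sum_sub_distrib, ← mem_closedBall_zero_iff]
  exact (convex_closedBall _ _).inv_card_smul_sum_mem fun i => mem_closedBall_zero_iff.mpr (h i)

variable (w) in
theorem norm_normMap_self_le_one (k : ι) : ‖normMap w (w k)‖ ≤ 1 := by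
  have hD : 0 ≤ tupDiam w := (norm_nonneg _).trans (norm_sub_le_tupDiam w k k)
  rw [normMap_eq, norm_smul, norm_inv, Real.norm_of_nonneg hD]
  exact inv_mul_le_one_of_le₀ (norm_sub_tupMean_le w k) hD

theorem norm_normMap_self_sub_le {γ : ℝ} (h : ∀ k, ‖v k - w k‖ ≤ γ) (hv : 0 < tupDiam v)
    (hw : 0 < tupDiam w) (k : ι) :
    ‖normMap v (v k) - normMap w (w k)‖ ≤ 4 * γ / tupDiam v := by
  have hγ : 0 ≤ γ := (norm_nonneg _).trans (h k)
  have hsplit : normMap v (v k) - normMap w (w k) =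
      (tupDiam v)⁻¹ • ((v k - w k) - (tupMean v - tupMean w)) +
        ((tupDiam v)⁻¹ - (tupDiam w)⁻¹) • (w k - tupMean w) := by
    rw [normMap_eq, normMap_eq]
    module
  have hfirst : ‖(tupDiam v)⁻¹ • ((v k - w k) - (tupMean v - tupMean w))‖ ≤ 2 * γ / tupDiam v := by
    rw [norm_smul, norm_inv, Real.norm_of_nonneg hv.le, inv_mul_eq_div]
    gcongr
    linarith [norm_sub_le (v k - w k) (tupMean v - tupMean w), h k, norm_tupMean_sub_le h]
  have hsecond : ‖((tupDiam v)⁻¹ - (tupDiam w)⁻¹) • (w k - tupMean w)‖ ≤ 2 * γ / tupDiam v := by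
    rw [norm_smul, inv_sub_inv hv.ne' hw.ne', norm_div, Real.norm_eq_abs, Real.norm_eq_abs,
      abs_of_pos (mul_pos hv hw), abs_sub_comm]
    calc |tupDiam v - tupDiam w| / (tupDiam v * tupDiam w) * ‖w k - tupMean w‖
        ≤ 2 * γ / (tupDiam v * tupDiam w) * tupDiam w := by
          gcongr
          exacts [abs_tupDiam_sub_le h, norm_sub_tupMean_le w k]
      _ = 2 * γ / tupDiam v := by field_simp
  calc ‖normMap v (v k) - normMap w (w k)‖ ≤ 2 * γ / tupDiam v + 2 * γ / tupDiam v := by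
        rw [hsplit]; exact (norm_add_le _ _).trans (add_le_add hfirst hsecond)
    _ = 4 * γ / tupDiam v := by ring

theorem norm_normMap_self_sub_le_of_le_tupDiam {γ δ : ℝ} (h : ∀ k, ‖w k - v k‖ ≤ γ)
    (hδ : 0 < δ) (hw : δ ≤ tupDiam w) (hγ : 4 * γ ≤ δ) (k : ι) :
    ‖normMap v (v k) - normMap w (w k)‖ ≤ 8 * γ / δ := by
  have hγ₀ : 0 ≤ γ := (norm_nonneg _).trans (h k)
  have hv : δ / 2 ≤ tupDiam v := by linarith [tupDiam_le_add h]
  have h' : ∀ k, ‖v k - w k‖ ≤ γ := fun k => norm_sub_rev (w k) (v k) ▸ h k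
  refine (norm_normMap_self_sub_le h' (by linarith) (by linarith) k).trans ?_
  rw [div_le_div_iff₀ (by linarith) hδ]
  nlinarith

end Normalization

instance (d ℓ : ℕ) : Nonempty (MonIdx d ℓ) := ⟨⟨0, by simp⟩⟩

theorem matOpNorm_eq_norm {ι : Type*} [Fintype ι] [DecidableEq ι] (M : Matrix ι ι ℝ) :
    matOpNorm M = ‖M‖ := rfl

theorem norm_psiMat_sub_le {d ℓ : ℕ} {u v : MonIdx d ℓ → EuclideanSpace ℝ (Fin d)} {ε : ℝ}
    (hu : ∀ k, ‖u k‖ ≤ 1) (hv : ∀ k, ‖v k‖ ≤ 1) (h : ∀ k, ‖v k - u k‖ ≤ ε) :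
    ‖PsiMat d ℓ v - PsiMat d ℓ u‖ ≤ Fintype.card (MonIdx d ℓ) * (ℓ * ε) := by
  have hε : 0 ≤ ε := (norm_nonneg _).trans (h (Classical.arbitrary _))
  refine Matrix.l2_opNorm_le_card_mul (by positivity) fun r α => ?_
  rw [Matrix.sub_apply, Real.norm_eq_abs]
  exact (abs_monomial_sub_le (fun i => (α.1 i : ℕ)) (hv r) (hu r)).trans
    (mul_le_mul (Nat.cast_le.mpr α.2) (h r) (norm_nonneg _) (Nat.cast_nonneg _))

theorem stmt13_general (d ℓ : ℕ)
    (x z : MonIdx d ℓ → EuclideanSpace ℝ (Fin d))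
    (δ₀ γ s : ℝ) (hδ₀ : 0 < δ₀)
    (hinv : IsUnit (PsiMat d ℓ (fun k => normMap x (x k))))
    (hops : matOpNorm (PsiMat d ℓ (fun k => normMap x (x k)))⁻¹ ≤ s)
    (hdiam : δ₀ ≤ tupDiam x)
    (hγ : ∀ k, ‖x k - z k‖ ≤ γ)
    (hcond : max 4 (16 * ((ℓ + d).choose d : ℝ) * ℓ * s) * γ ≤ δ₀) :
    IsUnit (PsiMat d ℓ (fun k => normMap z (z k))) ∧
    matOpNorm ((PsiMat d ℓ (fun k => normMap z (z k)))⁻¹ -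
        (PsiMat d ℓ (fun k => normMap x (x k)))⁻¹) ≤
      16 * ((ℓ + d).choose d : ℝ) * ℓ * s ^ 2 * γ / δ₀ := by
  set Ψx := PsiMat d ℓ (fun k => normMap x (x k))
  set Ψz := PsiMat d ℓ (fun k => normMap z (z k))
  set N : ℝ := (Fintype.card (MonIdx d ℓ) : ℝ)
  set ε := N * (ℓ * (8 * γ / δ₀))
  rw [matOpNorm_eq_norm, Matrix.nonsing_inv_eq_ringInverse] at hops
  have hs₀ : 0 ≤ s := (norm_nonneg _).trans hops
  have hγ₀ : 0 ≤ γ := (norm_nonneg _).trans (hγ (Classical.arbitrary _))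
  have hN : N ≤ (ℓ + d).choose d := Nat.cast_le.mpr (card_monIdx_le d ℓ)
  have h4γ : 4 * γ ≤ δ₀ := (mul_le_mul_of_nonneg_right (le_max_left _ _) hγ₀).trans hcond
  have hsε : s * ε ≤ 1 / 2 := by
    have : 16 * N * ℓ * s * γ ≤ δ₀ := calc
      _ ≤ 16 * ((ℓ + d).choose d : ℝ) * ℓ * s * γ := by gcongr
      _ ≤ _ := le_trans (by gcongr; exact le_max_right _ _) hcond
    rw [show s * ε = 8 * N * ℓ * s * γ / δ₀ by ring, div_le_iff₀ hδ₀]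
    linarith
  have hE : ‖Ψz - Ψx‖ ≤ ε := norm_psiMat_sub_le (norm_normMap_self_le_one x)
    (norm_normMap_self_le_one z) (norm_normMap_self_sub_le_of_le_tupDiam hγ hδ₀ hdiam h4γ)
  obtain ⟨hΨz, hbound⟩ := isUnit_and_norm_inverse_sub_inverse_le hinv hops hE hsε
  refine ⟨hΨz, ?_⟩
  rw [matOpNorm_eq_norm, Matrix.nonsing_inv_eq_ringInverse, Matrix.nonsing_inv_eq_ringInverse]
  calc _ ≤ 2 * s ^ 2 * ε := hbound
    _ = 16 * N * ℓ * s ^ 2 * γ / δ₀ := by ring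
    _ ≤ 16 * ((ℓ + d).choose d : ℝ) * ℓ * s ^ 2 * γ / δ₀ := by gcongr

/-- Lemma `lmm:perturb`.
Let `𝐱, 𝐳 ∈ (ℝ^d)^N`, `N = binom(ℓ+d,d)`, and `δ₀, γ, s > 0` with
`Ψ(η_𝐱(𝐱))` invertible, `‖Ψ(η_𝐱(𝐱))⁻¹‖_op ≤ s`, `δ₀ ≤ diam(𝐱)` and
`max_k ‖x_k − z_k‖ ≤ γ`.  If `max(4, 16·N·ℓ·s)·γ ≤ δ₀`, then `Ψ(η_𝐳(𝐳))` is
invertible and `‖Ψ(η_𝐳(𝐳))⁻¹ − Ψ(η_𝐱(𝐱))⁻¹‖_op ≤ 16·N·ℓ·s²·γ/δ₀`. -/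
theorem stmt13 (d ℓ : ℕ) (hd : 1 ≤ d) (hℓ : 1 ≤ ℓ)
    (x z : MonIdx d ℓ → EuclideanSpace ℝ (Fin d))
    (δ₀ γ s : ℝ) (hδ₀ : 0 < δ₀) (hγpos : 0 < γ) (hs : 0 < s)
    (hinv : IsUnit (PsiMat d ℓ (fun k => normMap x (x k))))
    (hops : matOpNorm (PsiMat d ℓ (fun k => normMap x (x k)))⁻¹ ≤ s)
    (hdiam : δ₀ ≤ tupDiam x)
    (hγ : ∀ k, ‖x k - z k‖ ≤ γ)
    (hcond : max 4 (16 * ((ℓ + d).choose d : ℝ) * ℓ * s) * γ ≤ δ₀) :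
    IsUnit (PsiMat d ℓ (fun k => normMap z (z k))) ∧
    matOpNorm ((PsiMat d ℓ (fun k => normMap z (z k)))⁻¹ -
        (PsiMat d ℓ (fun k => normMap x (x k)))⁻¹) ≤
      16 * ((ℓ + d).choose d : ℝ) * ℓ * s ^ 2 * γ / δ₀ :=
  stmt13_general d ℓ x z δ₀ γ s hδ₀ hinv hops hdiam hγ hcond
end
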